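/- arXiv:0910.3342 — 4 statements merged into one kernel-verified Lean document; each statement's English description precedes it below -/
import Mathlib

section
/- Let H be a group and K, N two subgroups such that H = K·N, i.e., every element of H can be written as kn with k ∈ K and n ∈ N. Let E be a field and (π, V) a representation of K over E. Then the restriction to N of the induced representation Ind_K^H π is isomorphic, as a representation of N, to Ind_{K∩N}^N of the restriction of π to K ∩ N, an isomorphism being given by f ↦ f|_N. -/
namespace ADLV

variable {E : Type*} [Field E]

/-- The `E`-submodule of `H`-equivariant `E`-linear maps between two representations. -/
def equivariantMaps {H V₁ V₂ : Type*} [Group H]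
    [AddCommGroup V₁] [Module E V₁] [AddCommGroup V₂] [Module E V₂]
    (ρ₁ : Representation E H V₁) (ρ₂ : Representation E H V₂) :
    Submodule E (V₁ →ₗ[E] V₂) where
  carrier := {f | ∀ (h : H) (v : V₁), f (ρ₁ h v) = ρ₂ h (f v)}
  zero_mem' := by intro h v; simp
  add_mem' := by intro f g hf hg h v; simp [hf h v, hg h v]
  smul_mem' := by intro c f hf h v; simp [hf h v]

/-- The one-dimensional representation attached to a character. -/
def charRep {H : Type*} [Group H] (χ : H →* Eˣ) : Representation E H E where
  toFun h := ((χ h : E) • (1 : E →ₗ[E] E))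
  map_one' := by simp
  map_mul' := by
    intro a b
    refine LinearMap.ext fun v => ?_
    simp [mul_smul]
    ring

variable {H : Type*} [Group H] {V : Type*} [AddCommGroup V] [Module E V]

/-- The space of functions underlying the induced representation `Ind_P^H π`. -/
def indV (P : Subgroup H) (π : Representation E ↥P V) : Submodule E (H → V) where
  carrier := {f | ∀ (p : ↥P) (g : H), f (↑p * g) = π p (f g)}
  zero_mem' := by intro p g; simp
  add_mem' := by intro f g hf hg p x; simp [hf p x, hg p x]
  smul_mem' := by intro c f hf p x; simp [hf p x]

/-- The induced representation `Ind_P^H π`. -/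
def ind (P : Subgroup H) (π : Representation E ↥P V) :
    Representation E H ↥(indV P π) where
  toFun h :=
    { toFun := fun f => ⟨fun x => (f : H → V) (x * h), fun p g => by
        show (f : H → V) ((↑p * g) * h) = (π p) ((f : H → V) (g * h))
        rw [mul_assoc]; exact f.2 p (g * h)⟩
      map_add' := fun f g => rfl
      map_smul' := fun c f => rfl }
  map_one' := LinearMap.ext fun f => Subtype.ext <| funext fun x => by
    show (f : H → V) (x * 1) = (f : H → V) x
    rw [mul_one]
  map_mul' := fun a b => LinearMap.ext fun f => Subtype.ext <| funext fun x => by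
    show (f : H → V) (x * (a * b)) = (f : H → V) (x * a * b)
    rw [mul_assoc]

/-- The space of functions underlying the compactly induced representation `ind_P^H π`:
functions in `Ind_P^H π` supported on finitely many right cosets `Pg`. -/
def cIndV (P : Subgroup H) (π : Representation E ↥P V) : Submodule E (H → V) where
  carrier := {f | (∀ (p : ↥P) (g : H), f (↑p * g) = π p (f g)) ∧
      ∃ S : Finset H, ∀ x, f x ≠ 0 → ∃ s ∈ S, ∃ p ∈ P, x = p * s}
  zero_mem' := ⟨by intro p g; simp, ⟨∅, fun x hx => absurd rfl hx⟩⟩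
  add_mem' := by
    classical
    rintro f g ⟨hf1, Sf, hf2⟩ ⟨hg1, Sg, hg2⟩
    refine ⟨by intro p x; simp [hf1 p x, hg1 p x], Sf ∪ Sg, fun x hx => ?_⟩
    by_cases h : f x ≠ 0
    · obtain ⟨s, hs, hp⟩ := hf2 x h
      exact ⟨s, Finset.mem_union_left _ hs, hp⟩
    · push_neg at h
      have hgx : g x ≠ 0 := by
        intro h0
        apply hx
        simp [Pi.add_apply, h, h0]
      obtain ⟨s, hs, hp⟩ := hg2 x hgx
      exact ⟨s, Finset.mem_union_right _ hs, hp⟩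
  smul_mem' := by
    rintro c f ⟨hf1, Sf, hf2⟩
    refine ⟨by intro p x; simp [hf1 p x], Sf, fun x hx => hf2 x ?_⟩
    intro h0
    apply hx
    simp [Pi.smul_apply, h0]

/-- The compactly induced representation `ind_P^H π`. -/
def cind (P : Subgroup H) (π : Representation E ↥P V) :
    Representation E H ↥(cIndV P π) where
  toFun h :=
    { toFun := fun f => ⟨fun x => (f : H → V) (x * h),
        ⟨fun p g => by
          show (f : H → V) ((↑p * g) * h) = (π p) ((f : H → V) (g * h))
          rw [mul_assoc]; exact f.2.1 p (g * h), by
          classical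
          obtain ⟨S, hS⟩ := f.2.2
          refine ⟨S.image (fun s => s * h⁻¹), fun x hx => ?_⟩
          obtain ⟨s, hs, p, hp, hxe⟩ := hS (x * h) hx
          refine ⟨s * h⁻¹, Finset.mem_image_of_mem _ hs, p, hp, ?_⟩
          rw [← mul_assoc, ← hxe, mul_inv_cancel_right]⟩⟩
      map_add' := fun f g => rfl
      map_smul' := fun c f => rfl }
  map_one' := LinearMap.ext fun f => Subtype.ext <| funext fun x => by
    show (f : H → V) (x * 1) = (f : H → V) x
    rw [mul_one]
  map_mul' := fun a b => LinearMap.ext fun f => Subtype.ext <| funext fun x => by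
    show (f : H → V) (x * (a * b)) = (f : H → V) (x * a * b)
    rw [mul_assoc]


/-- The inclusion of `K ∩ N` (viewed as a subgroup of `N`) into `K`. -/
def inclKN {H : Type*} [Group H] (K N : Subgroup H) : ↥(K.subgroupOf N) →* ↥K where
  toFun x := ⟨(x : ↥N), Subgroup.mem_subgroupOf.mp x.2⟩
  map_one' := rfl
  map_mul' _ _ := rfl

section Aux

variable {E : Type*} [Field E] {H : Type*} [Group H]
  {V : Type*} [AddCommGroup V] [Module E V]

lemma key (K N : Subgroup H) (π : Representation E ↥K V) (f : ↥N → V)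
    (hf : ∀ (p : ↥(K.subgroupOf N)) (g : ↥N), f (↑p * g) = (π.comp (inclKN K N)) p (f g))
    (k₁ k₂ : ↥K) (n₁ n₂ : ↥N) (heq : (k₁ : H) * (n₁ : H) = (k₂ : H) * (n₂ : H)) :
    π k₁ (f n₁) = π k₂ (f n₂) := by
  have hm : ((k₂⁻¹ * k₁ : ↥K) : H) = ((n₂ * n₁⁻¹ : ↥N) : H) := by
    push_cast
    rw [inv_mul_eq_iff_eq_mul, ← mul_assoc, ← heq, mul_inv_cancel_right]
  have hmem : ((n₂ * n₁⁻¹ : ↥N) : H) ∈ K := by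
    rw [← hm]; exact (k₂⁻¹ * k₁).2
  set p : ↥(K.subgroupOf N) := ⟨n₂ * n₁⁻¹, Subgroup.mem_subgroupOf.mpr hmem⟩ with hp
  have hincl : inclKN K N p = k₂⁻¹ * k₁ := Subtype.ext hm.symm
  have h1 : (↑p * n₁ : ↥N) = n₂ := by
    simp [hp, mul_assoc]
  have := hf p n₁
  rw [h1, MonoidHom.comp_apply, hincl] at this
  rw [this, ← Module.End.mul_apply, ← map_mul, mul_inv_cancel_left]

variable (K N : Subgroup H) (hKN : ∀ h : H, ∃ x ∈ K, ∃ n ∈ N, h = x * n)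
  (π : Representation E ↥K V)

/-- A choice of `K`-part of a decomposition `h = k n`. -/
noncomputable def decK (h : H) : ↥K := ⟨(hKN h).choose, (hKN h).choose_spec.1⟩

/-- A choice of `N`-part of a decomposition `h = k n`. -/
noncomputable def decN (h : H) : ↥N :=
  ⟨(hKN h).choose_spec.2.choose, (hKN h).choose_spec.2.choose_spec.1⟩

lemma dec_spec (h : H) : h = (decK K N hKN h : H) * (decN K N hKN h : H) :=
  (hKN h).choose_spec.2.choose_spec.2

/-- Extension of a function on `N` to `H`. -/
noncomputable def extFun (f : ↥N → V) (h : H) : V :=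
  π (decK K N hKN h) (f (decN K N hKN h))

lemma extFun_eq (f : ↥N → V)
    (hf : ∀ (p : ↥(K.subgroupOf N)) (g : ↥N), f (↑p * g) = (π.comp (inclKN K N)) p (f g))
    (k : ↥K) (n : ↥N) : extFun K N hKN π f ((k : H) * (n : H)) = π k (f n) := by
  unfold extFun
  exact key K N π f hf _ k _ n (dec_spec K N hKN ((k : H) * n)).symm

lemma extFun_on_N (f : ↥N → V)
    (hf : ∀ (p : ↥(K.subgroupOf N)) (g : ↥N), f (↑p * g) = (π.comp (inclKN K N)) p (f g))
    (n : ↥N) : extFun K N hKN π f (n : H) = f n := by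
  have := extFun_eq K N hKN π f hf 1 n
  simpa using this

lemma extFun_mem (f : ↥N → V)
    (hf : ∀ (p : ↥(K.subgroupOf N)) (g : ↥N), f (↑p * g) = (π.comp (inclKN K N)) p (f g)) :
    extFun K N hKN π f ∈ indV K π := by
  intro p g
  have hg := dec_spec K N hKN g
  set k := decK K N hKN g
  set n := decN K N hKN g
  have h1 : (p : H) * g = ((p * k : ↥K) : H) * (n : H) := by
    rw [hg]; push_cast; rw [mul_assoc]
  rw [h1, extFun_eq K N hKN π f hf (p * k) n, hg,
    extFun_eq K N hKN π f hf k n]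
  rw [map_mul, Module.End.mul_apply]

end Aux

/-- The paper's Lemma `cIndIso`: if `H = K · N`, then the restriction to `N` of
`Ind_K^H π` is isomorphic to `Ind_{K∩N}^N (π|_{K∩N})`, an isomorphism being given
by restriction of functions `f ↦ f|_N`. -/
theorem ind_restrict_iso (E : Type*) [Field E] (H : Type*) [Group H]
    (K N : Subgroup H) (hKN : ∀ h : H, ∃ x ∈ K, ∃ n ∈ N, h = x * n)
    (V : Type*) [AddCommGroup V] [Module E V] (π : Representation E ↥K V) :
    ∃ e : ↥(indV K π) ≃ₗ[E] ↥(indV (K.subgroupOf N) (π.comp (inclKN K N))),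
      (∀ (n : ↥N) (f : ↥(indV K π)),
        e ((ind K π) (↑n) f) = (ind (K.subgroupOf N) (π.comp (inclKN K N))) n (e f)) ∧
      (∀ (f : ↥(indV K π)) (n : ↥N), (e f : ↥N → V) n = (f : H → V) (↑n)) := by
  classical
  have resMem : ∀ F : ↥(indV K π),
      (fun n : ↥N => (F : H → V) ↑n) ∈ indV (K.subgroupOf N) (π.comp (inclKN K N)) :=
    fun F p g => F.2 (inclKN K N p) g
  refine ⟨{ toFun := fun F => ⟨fun n => (F : H → V) ↑n, resMem F⟩
            map_add' := fun F G => rfl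
            map_smul' := fun c F => rfl
            invFun := fun f => ⟨extFun K N hKN π f, extFun_mem K N hKN π f f.2⟩
            left_inv := fun F => Subtype.ext <| funext fun h => ?_
            right_inv := fun f => Subtype.ext <| funext fun n =>
              extFun_on_N K N hKN π f f.2 n }, fun n F => rfl, fun F n => rfl⟩
  have h2 := extFun_eq K N hKN π (fun n : ↥N => (F : H → V) ↑n) (resMem F)
    (decK K N hKN h) (decN K N hKN h)
  rw [← dec_spec K N hKN h] at h2
  show extFun K N hKN π (fun n : ↥N => (F : H → V) ↑n) h = (F : H → V) h
  rw [h2]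
  conv_rhs => rw [dec_spec K N hKN h]
  exact (F.2 _ _).symm

end ADLV
end

section
/- Let k be a finite field, G = GL₂(k), B ≤ G the subgroup of upper triangular matrices, T ≤ G the subgroup of diagonal matrices, and E a field. Then the restriction to B of the induced representation Ind_B^G 1_E is isomorphic, as a representation of B, to the direct sum 1_E ⊕ Ind_T^B 1_E. -/
/-!
Bruhat decomposition: `GL₂(k) = B ⊔ BwB` with `w` the Weyl element. A left `B`-invariant function
`f` on `G` is therefore determined by its value `f 1` on `B` and by the function `b ↦ f (w b)` on
`B`, and the latter ranges over the functions invariant on the left under `B ∩ w⁻¹Bw = T`.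
Right translation by `B` fixes `f 1` (by left invariance) and acts on `b ↦ f (w b)` by right
translation. This is the Mackey formula for a group with two `(P, P)`-double cosets.
-/

namespace ADLV

variable {E : Type*} [Field E]

variable {H : Type*} [Group H] {V : Type*} [AddCommGroup V] [Module E V]

section MatrixGroups

variable (R : Type*) [Field R]

/-- `GL₂(R)`, the unit group of the ring of 2×2 matrices over `R`. -/
abbrev GL2 := (Matrix (Fin 2) (Fin 2) R)ˣ

/-- The Borel subgroup of upper triangular matrices in `GL₂(R)`. -/
def upperB : Subgroup (GL2 R) where
  carrier := {g | (g : Matrix (Fin 2) (Fin 2) R) 1 0 = 0}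
  one_mem' := by
    show ((1 : GL2 R) : Matrix (Fin 2) (Fin 2) R) 1 0 = 0
    simp [Matrix.one_apply]
  mul_mem' := by
    intro a b ha hb
    simp only [Set.mem_setOf_eq] at ha hb ⊢
    rw [Units.val_mul, Matrix.mul_apply, Fin.sum_univ_two]
    simp [ha, hb]
  inv_mem' := by
    intro a ha
    simp only [Set.mem_setOf_eq] at ha ⊢
    rw [Matrix.coe_units_inv, Matrix.inv_def, Matrix.adjugate_fin_two]
    simp [ha]

/-- The diagonal torus in `GL₂(R)`. -/
def diagT : Subgroup (GL2 R) where
  carrier := {g | (g : Matrix (Fin 2) (Fin 2) R) 0 1 = 0 ∧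
    (g : Matrix (Fin 2) (Fin 2) R) 1 0 = 0}
  one_mem' := by
    constructor <;>
      · show ((1 : GL2 R) : Matrix (Fin 2) (Fin 2) R) _ _ = 0
        simp [Matrix.one_apply]
  mul_mem' := by
    intro a b ha hb
    simp only [Set.mem_setOf_eq] at ha hb ⊢
    constructor <;>
      · rw [Units.val_mul, Matrix.mul_apply, Fin.sum_univ_two]
        simp [ha.1, ha.2, hb.1, hb.2]
  inv_mem' := by
    intro a ha
    simp only [Set.mem_setOf_eq] at ha ⊢
    rw [Matrix.coe_units_inv, Matrix.inv_def, Matrix.adjugate_fin_two]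
    constructor <;> simp [ha.1, ha.2]

end MatrixGroups

/-- The direct sum of two representations. -/
def prodRep {E : Type*} [Field E] {H V₁ V₂ : Type*} [Group H]
    [AddCommGroup V₁] [Module E V₁] [AddCommGroup V₂] [Module E V₂]
    (ρ₁ : Representation E H V₁) (ρ₂ : Representation E H V₂) :
    Representation E H (V₁ × V₂) where
  toFun h := (ρ₁ h).prodMap (ρ₂ h)
  map_one' := LinearMap.ext fun x => by simp
  map_mul' := fun a b => LinearMap.ext fun x => by simp

section TwoDoubleCosets

variable {P : Subgroup H}

lemma indV_one_apply_mul (f : indV P (1 : Representation E P E)) {p : H} (hp : p ∈ P) (x : H) :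
    (f : H → E) (p * x) = (f : H → E) x := by
  simpa using f.2 ⟨p, hp⟩ x

variable {Q : Subgroup P} {w : H}

def indOneToProd (hQ : ∀ q : P, q ∈ Q → w * q * w⁻¹ ∈ P) :
    indV P (1 : Representation E P E) →ₗ[E] E × indV Q (1 : Representation E Q E) where
  toFun f := ((f : H → E) 1, ⟨fun b => (f : H → E) (w * b), fun q b => by
    simpa [mul_assoc] using indV_one_apply_mul f (hQ q q.2) (w * b)⟩)
  map_add' _ _ := rfl
  map_smul' _ _ := rfl

lemma indV_one_eq_of_mul_inv_mem (hQ : ∀ q : P, w * q * w⁻¹ ∈ P → q ∈ Q)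
    (g : indV Q (1 : Representation E Q E)) {x : H} {q q' : P}
    (hq : x * (w * q)⁻¹ ∈ P) (hq' : x * (w * q')⁻¹ ∈ P) : (g : P → E) q = (g : P → E) q' := by
  have hmem : q * q'⁻¹ ∈ Q := by
    apply hQ
    convert P.mul_mem (P.inv_mem hq) hq' using 1
    simp only [Subgroup.coe_mul, Subgroup.coe_inv]
    group
  simpa using indV_one_apply_mul g hmem q'

-- `H = P ∪ PwP`: every `x ∉ P` lies in some `P w q`.
variable (hPwP : ∀ x ∉ P, ∃ q : P, x * (w * q)⁻¹ ∈ P)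

open Classical in
noncomputable def extendFromDoubleCosets {α : Type*} (c : α) (g : P → α) (x : H) : α :=
  if hx : x ∈ P then c else g (hPwP x hx).choose

lemma extendFromDoubleCosets_of_mem {α : Type*} (c : α) (g : P → α) {x : H} (hx : x ∈ P) :
    extendFromDoubleCosets hPwP c g x = c :=
  dif_pos hx

lemma extendFromDoubleCosets_of_mul_inv_mem (hQ : ∀ q : P, w * q * w⁻¹ ∈ P → q ∈ Q) (c : E)
    (g : indV Q (1 : Representation E Q E)) {x : H} (hx : x ∉ P) {q : P}
    (hq : x * (w * q)⁻¹ ∈ P) : extendFromDoubleCosets hPwP c g x = (g : P → E) q := by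
  rw [extendFromDoubleCosets, dif_neg hx]
  exact indV_one_eq_of_mul_inv_mem hQ g (hPwP x hx).choose_spec hq

lemma extendFromDoubleCosets_mem_indV (hQ : ∀ q : P, w * q * w⁻¹ ∈ P → q ∈ Q) (c : E)
    (g : indV Q (1 : Representation E Q E)) :
    extendFromDoubleCosets hPwP c g ∈ indV P (1 : Representation E P E) := by
  intro p x
  simp only [MonoidHom.one_apply, Module.End.one_apply]
  by_cases hx : x ∈ P
  · rw [extendFromDoubleCosets_of_mem hPwP c g hx,
      extendFromDoubleCosets_of_mem hPwP c g (P.mul_mem p.2 hx)]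
  · have hpx : ↑p * x ∉ P := fun h => hx (by simpa using P.mul_mem (P.inv_mem p.2) h)
    obtain ⟨q, hq⟩ := hPwP x hx
    rw [extendFromDoubleCosets_of_mul_inv_mem hPwP hQ c g hx hq,
      extendFromDoubleCosets_of_mul_inv_mem hPwP hQ c g hpx (q := q)
        (by simpa [mul_assoc] using P.mul_mem p.2 hq)]

noncomputable def indOneEquivProd (hw : w ∉ P) (hQ : ∀ q : P, q ∈ Q ↔ w * q * w⁻¹ ∈ P) :
    indV P (1 : Representation E P E) ≃ₗ[E] E × indV Q (1 : Representation E Q E) where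
  __ := indOneToProd fun q => (hQ q).1
  invFun cg := ⟨extendFromDoubleCosets hPwP cg.1 cg.2,
    extendFromDoubleCosets_mem_indV hPwP (fun q => (hQ q).2) cg.1 cg.2⟩
  left_inv f := by
    ext x
    by_cases hx : x ∈ P
    · simpa [extendFromDoubleCosets_of_mem hPwP _ _ hx, indOneToProd]
        using (indV_one_apply_mul f hx 1).symm
    · obtain ⟨q, hq⟩ := hPwP x hx
      simp only [extendFromDoubleCosets_of_mul_inv_mem hPwP (fun q => (hQ q).2) _ _ hx hq]
      have hfx := indV_one_apply_mul f hq (w * q)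
      rw [inv_mul_cancel_right] at hfx
      exact hfx.symm
  right_inv cg := by
    ext b
    · exact extendFromDoubleCosets_of_mem hPwP _ _ P.one_mem
    · have hwb : w * b ∉ P := fun h => hw (by simpa using P.mul_mem h (P.inv_mem b.2))
      exact extendFromDoubleCosets_of_mul_inv_mem hPwP (fun q => (hQ q).2) _ _ hwb
        (by simp)

lemma indOneEquivProd_ind (hw : w ∉ P) (hQ : ∀ q : P, q ∈ Q ↔ w * q * w⁻¹ ∈ P) (b : P)
    (f : indV P (1 : Representation E P E)) :
    indOneEquivProd hPwP hw hQ (ind P (1 : Representation E P E) b f) =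
      prodRep (1 : Representation E P E) (ind Q (1 : Representation E Q E)) b
        (indOneEquivProd hPwP hw hQ f) := by
  ext x
  · simpa [indOneEquivProd, indOneToProd, ind, prodRep] using indV_one_apply_mul f b.2 1
  · simp [indOneEquivProd, indOneToProd, ind, prodRep, mul_assoc]

end TwoDoubleCosets

section GL2

variable (k : Type*) [Field k]

def weyl : GL2 k := Matrix.GeneralLinearGroup.mkOfDetNeZero !![0, 1; 1, 0] (by simp)

lemma weyl_mul_self : weyl k * weyl k = 1 := by
  ext i j
  fin_cases i <;> fin_cases j <;> simp [weyl, Matrix.mul_apply, Fin.sum_univ_two]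

lemma weyl_not_mem_upperB : weyl k ∉ upperB k := by
  simp [upperB, weyl]

variable {k}

lemma mem_upperB_iff (x : GL2 k) : x ∈ upperB k ↔ x.val 1 0 = 0 :=
  Iff.rfl

lemma mem_diagT_subgroupOf_upperB_iff (b : upperB k) :
    b ∈ (diagT k).subgroupOf (upperB k) ↔ weyl k * b * (weyl k)⁻¹ ∈ upperB k := by
  have hb : (b : GL2 k).val 1 0 = 0 := b.2
  rw [inv_eq_of_mul_eq_one_right (weyl_mul_self k), Subgroup.mem_subgroupOf, mem_upperB_iff]
  simp [diagT, weyl, hb, Matrix.mul_apply, Matrix.vecMul, dotProduct, Fin.sum_univ_two]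

lemma exists_mul_inv_weyl_mul_mem_upperB {x : GL2 k} (hx : x ∉ upperB k) :
    ∃ q : upperB k, x * (weyl k * q)⁻¹ ∈ upperB k := by
  rw [mem_upperB_iff] at hx
  set q := Matrix.GeneralLinearGroup.mkOfDetNeZero !![x.val 1 0, x.val 1 1; 0, 1] (by simpa)
  refine ⟨⟨q, by simp [mem_upperB_iff, q]⟩, ?_⟩
  set p := x * (weyl k * q)⁻¹
  -- `w q` has the same bottom row as `x`, so `p = x (w q)⁻¹` has bottom row `(0, 1)`.
  have hxp : x = p * (weyl k * q) := (inv_mul_cancel_right x _).symm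
  have h10 : x.val 1 0 = p.val 1 1 * x.val 1 0 := by
    conv_lhs => rw [hxp]
    simp [q, weyl, Matrix.mul_apply, Fin.sum_univ_two]
  have h11 : x.val 1 1 = p.val 1 0 + p.val 1 1 * x.val 1 1 := by
    conv_lhs => rw [hxp]
    simp [q, weyl, Matrix.mul_apply, Fin.sum_univ_two]
  have hp11 : p.val 1 1 = 1 := mul_right_cancel₀ hx (h10.symm.trans (one_mul _).symm)
  rw [mem_upperB_iff]
  linear_combination -h11 - x.val 1 1 * hp11

end GL2

theorem ind_B_one_restrict_iso_general (k : Type*) [Field k]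
    (E : Type*) [Field E] :
    ∃ e : ↥(indV (upperB k) (1 : Representation E ↥(upperB k) E)) ≃ₗ[E]
        (E × ↥(indV ((diagT k).subgroupOf (upperB k))
          (1 : Representation E ↥((diagT k).subgroupOf (upperB k)) E))),
      ∀ (b : ↥(upperB k)) (f : ↥(indV (upperB k) (1 : Representation E ↥(upperB k) E))),
        e ((ind (upperB k) (1 : Representation E ↥(upperB k) E)) (↑b) f) =
          (prodRep (1 : Representation E ↥(upperB k) E)
            (ind ((diagT k).subgroupOf (upperB k))
              (1 : Representation E ↥((diagT k).subgroupOf (upperB k)) E))) b (e f) :=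
  ⟨indOneEquivProd (fun _ => exists_mul_inv_weyl_mul_mem_upperB) (weyl_not_mem_upperB k)
      mem_diagT_subgroupOf_upperB_iff,
    indOneEquivProd_ind _ _ _⟩

/-- Mackey-type lemma for `GL₂` of a finite field `k`: the restriction to the Borel
subgroup `B` of `Ind_B^G 1` is isomorphic to `1 ⊕ Ind_T^B 1`, where `T ≤ B` is the
diagonal torus. -/
theorem ind_B_one_restrict_iso (k : Type*) [Field k] [Fintype k]
    (E : Type*) [Field E] :
    ∃ e : ↥(indV (upperB k) (1 : Representation E ↥(upperB k) E)) ≃ₗ[E]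
        (E × ↥(indV ((diagT k).subgroupOf (upperB k))
          (1 : Representation E ↥((diagT k).subgroupOf (upperB k)) E))),
      ∀ (b : ↥(upperB k)) (f : ↥(indV (upperB k) (1 : Representation E ↥(upperB k) E))),
        e ((ind (upperB k) (1 : Representation E ↥(upperB k) E)) (↑b) f) =
          (prodRep (1 : Representation E ↥(upperB k) E)
            (ind ((diagT k).subgroupOf (upperB k))
              (1 : Representation E ↥((diagT k).subgroupOf (upperB k)) E))) b (e f) :=
  ind_B_one_restrict_iso_general k E

end ADLV
end

section
/- Let G be a tree and σ an automorphism of G whose fixed vertex set S = {x : σ(x) = x} is nonempty. Then: (i) S is connected (the subgraph induced on S is connected); (ii) for every vertex v with v ∉ S, dist(v, σ(v)) = 2 · dist(v, S), where dist(v,S) is the minimum of dist(v,s) over s ∈ S. -/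
/-!
An automorphism `σ` of a tree maps the unique path between two fixed vertices to a path with
the same endpoints, hence to itself; as `σ` preserves the distance to the fixed endpoint and a
vertex of a path is determined by that distance, `σ` fixes the path pointwise.
For (ii), let `s` be a fixed vertex nearest to `v` and `p` the path from `v` to `s`. A common
vertex `σ a` of `p` and `σ p` (with `a` on `p`) is fixed by the same argument, so `a` is a fixed
vertex on `p` and minimality forces `a = s`. Hence `p` followed by the reverse of `σ p` is a
path, i.e. the geodesic from `v` to `σ v`, and it has length `2 · dist(v, s)`.
-/

namespace SimpleGraph

variable {V V' : Type*} {G : SimpleGraph V} {G' : SimpleGraph V'} {u v w : V}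

lemma Iso.dist_map (f : G ≃g G') (u v : V) : G'.dist (f u) (f v) = G.dist u v := by
  by_cases h : G.Reachable u v
  · obtain ⟨p, hp⟩ := h.exists_walk_length_eq_dist
    obtain ⟨q, hq⟩ := (Iso.reachable_iff (φ := f)).2 h |>.exists_walk_length_eq_dist
    apply le_antisymm
    · simpa [hp] using dist_le (p.map f.toHom)
    · simpa [hq] using dist_le (q.map f.symm.toHom)
  · rw [dist_eq_zero_of_not_reachable h,
      dist_eq_zero_of_not_reachable (mt Iso.reachable_iff.1 h)]

lemma Walk.IsPath.append {p : G.Walk u v} {q : G.Walk v w} (hp : p.IsPath) (hq : q.IsPath)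
    (h : ∀ x ∈ p.support, x ∈ q.support → x = v) : (p.append q).IsPath := by
  have hq' := hq.support_nodup
  rw [← q.cons_tail_support, List.nodup_cons] at hq'
  rw [Walk.isPath_def, Walk.support_append, List.nodup_append]
  refine ⟨hp.support_nodup, hq'.2, fun x hx y hy hxy => ?_⟩
  subst hxy
  obtain rfl := h x hx (List.mem_of_mem_tail hy)
  exact hq'.1 hy

lemma IsAcyclic.length_eq_dist (hG : G.IsAcyclic) {p : G.Walk u v} (hp : p.IsPath) :
    p.length = G.dist u v := by
  obtain ⟨q, hq, hlen⟩ := p.reachable.exists_path_of_dist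
  have : p = q := congrArg Subtype.val ((hG.subsingleton_path u v).elim ⟨p, hp⟩ ⟨q, hq⟩)
  rw [this, hlen]

lemma IsAcyclic.dist_add_dist_of_mem_support (hG : G.IsAcyclic) {p : G.Walk u w}
    (hp : p.IsPath) (hv : v ∈ p.support) : G.dist u v + G.dist v w = G.dist u w := by
  obtain ⟨q, r, hq, hr, rfl⟩ := hp.mem_support_iff_exists_append.1 hv
  rw [← hG.length_eq_dist hq, ← hG.length_eq_dist hr, ← hG.length_eq_dist hp,
    Walk.length_append]

lemma IsAcyclic.eq_of_mem_support_of_dist_eq (hG : G.IsAcyclic) {p : G.Walk u w}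
    (hp : p.IsPath) {a b : V} (ha : a ∈ p.support) (hb : b ∈ p.support)
    (hab : G.dist a w = G.dist b w) : a = b := by
  obtain ⟨q, r, hq, hr, rfl⟩ := hp.mem_support_iff_exists_append.1 ha
  rcases (Walk.mem_support_append_iff q r).1 hb with hbq | hbr
  · obtain ⟨q₁, q₂, -, -, rfl⟩ := hq.mem_support_iff_exists_append.1 hbq
    rw [← Walk.append_assoc] at hp
    have h₂ := hG.length_eq_dist hp.of_append_right
    rw [Walk.length_append, hG.length_eq_dist hr, hab] at h₂
    exact (Walk.eq_of_length_eq_zero (by omega : q₂.length = 0)).symm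
  · obtain ⟨r₁, r₂, -, hr₂, rfl⟩ := hr.mem_support_iff_exists_append.1 hbr
    have h₁ := hG.length_eq_dist hr
    rw [Walk.length_append, hG.length_eq_dist hr₂, hab] at h₁
    exact Walk.eq_of_length_eq_zero (by omega : r₁.length = 0)

lemma IsAcyclic.apply_eq_self_of_apply_mem_support (hG : G.IsAcyclic) (σ : G ≃g G)
    {p : G.Walk u w} (hp : p.IsPath) (hw : σ w = w) (hv : v ∈ p.support)
    (hσv : σ v ∈ p.support) : σ v = v :=
  hG.eq_of_mem_support_of_dist_eq hp hσv hv (by rw [← σ.dist_map v w, hw])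

lemma IsAcyclic.apply_eq_self_of_mem_support (hG : G.IsAcyclic) (σ : G ≃g G)
    {p : G.Walk u w} (hp : p.IsPath) (hu : σ u = u) (hw : σ w = w) (hv : v ∈ p.support) :
    σ v = v := by
  have hσp : ((p.map σ.toHom).copy hu hw).IsPath := by
    rw [Walk.isPath_copy]
    exact hp.map σ.injective
  have hσp_eq : (p.map σ.toHom).copy hu hw = p :=
    congrArg Subtype.val ((hG.subsingleton_path u w).elim ⟨_, hσp⟩ ⟨p, hp⟩)
  refine hG.apply_eq_self_of_apply_mem_support σ hp hw hv ?_
  rw [← hσp_eq, Walk.support_copy, Walk.support_map]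
  exact List.mem_map_of_mem hv

lemma IsTree.connected_induce_fixedPoints (hG : G.IsTree) (σ : G ≃g G)
    (hσ : (Function.fixedPoints σ).Nonempty) : (G.induce (Function.fixedPoints σ)).Connected := by
  obtain ⟨x, hx⟩ := hσ
  refine induce_connected_of_patches x hx fun {y} hy => ?_
  obtain ⟨p, hp, -⟩ := hG.existsUnique_path x y
  exact ⟨{z | z ∈ p.support}, fun z hz => hG.isAcyclic.apply_eq_self_of_mem_support σ hp hx hy hz,
    p.start_mem_support, p.end_mem_support, p.connected_induce_support.preconnected _ _⟩

lemma IsTree.dist_apply_eq_two_mul (hG : G.IsTree) (σ : G ≃g G) {v s : V} (hs : σ s = s)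
    (hmin : ∀ t, σ t = t → G.dist v s ≤ G.dist v t) : G.dist v (σ v) = 2 * G.dist v s := by
  obtain ⟨p, hp, -⟩ := hG.existsUnique_path v s
  set q : G.Walk (σ v) s := (p.map σ.toHom).copy rfl hs
  have hq : q.IsPath := by
    rw [Walk.isPath_copy]
    exact hp.map σ.injective
  have hmeet : ∀ x ∈ p.support, x ∈ q.support → x = s := by
    intro x hxp hxq
    rw [Walk.support_copy, Walk.support_map, List.mem_map] at hxq
    obtain ⟨a, hap, rfl⟩ := hxq
    have hfix : σ a = a := hG.isAcyclic.apply_eq_self_of_apply_mem_support σ hp hs hap hxp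
    have hsplit := hG.isAcyclic.dist_add_dist_of_mem_support hp hap
    have hle := hmin a hfix
    change σ a = s
    rw [hfix]
    exact (hG.connected a s).dist_eq_zero_iff.1 (by omega)
  have hpath := hp.append hq.reverse (by simpa using hmeet)
  rw [← hG.isAcyclic.length_eq_dist hpath, Walk.length_append, Walk.length_reverse,
    Walk.length_copy, Walk.length_map, hG.isAcyclic.length_eq_dist hp, two_mul]

end SimpleGraph

/-- For an automorphism `σ` of a tree `G` with nonempty fixed vertex set `S`:
(i) `S` is connected; (ii) for every vertex `v ∉ S`,
`dist v (σ v) = 2 * dist(v, S)`. -/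
theorem fixed_set_connected_and_dist {V : Type*} (G : SimpleGraph V) (hT : G.IsTree)
    (σ : G ≃g G) (hS : {x : V | σ x = x}.Nonempty) :
    (G.induce {x : V | σ x = x}).Connected ∧
    ∀ v : V, v ∉ {x : V | σ x = x} →
      G.dist v (σ v) = 2 * sInf (G.dist v '' {x : V | σ x = x}) := by
  refine ⟨hT.connected_induce_fixedPoints σ hS, fun v _ => ?_⟩
  obtain ⟨s, hs, hds⟩ := Nat.sInf_mem (hS.image (G.dist v))
  rw [← hds]
  exact hT.dist_apply_eq_two_mul σ hs fun t ht => hds ▸ Nat.sInf_le ⟨t, ht, rfl⟩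
end

section
/- Let k be a field, l ≥ 0 an integer, R = k[X]/(X^{l+1}), N = R² the free R-module with standard basis (e₁, e₂), and N₁ = R·e₁ + R·(X e₂) the R-submodule of pairs whose second coordinate lies in the ideal (X). For R-submodules L ⊆ L′ of N the following are equivalent: (a) dim_k L = l+1, dim_k L′ = l+2, the quotients N/L and N/L′ are cyclic R-modules, and L is not contained in N₁; (b) there exist scalars a₀, …, a_l ∈ k such that L = R·v and L′ = L + k·(X^l e₁), where v = e₂ + (a₀ + a₁X + ⋯ + a_l X^l)·e₁. Moreover, in case (b) the scalars a₀, …, a_l are uniquely determined by the pair (L, L′), and L′ is uniquely determined by L. -/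
/-!
The ring `R = k[X]/(X^(l+1))` is local with maximal ideal `(X)`, and every nonzero element
divides `X^l`, while `R·X^l = k·X^l`. If `L ⊄ N₁`, some element of `L` has a unit as second
coordinate; rescaling it gives `v = (p, 1) ∈ L`, and `R·v ≅ R` has dimension `l + 1`, so
`L = R·v`. Since `N = R·v ⊕ R·e₁`, an element of `L' ∖ L` produces a nonzero `d·e₁ ∈ L'`, hence
`X^l e₁ ∈ L'`, and `L + R·X^l e₁` has dimension `l + 2`, so it is `L'`. Conversely `N/L` and
`N/L'` are generated by the class of `e₁`, and `(q, 1) ∈ R·(p, 1)` forces `q = p`, whose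
coordinates in the basis `1, X, …, X^l` are the `aᵢ`.
-/

set_option synthInstance.maxHeartbeats 1000000
set_option maxHeartbeats 2000000

namespace ADLV

variable (k : Type*) [Field k] (l : ℕ)

/-- The ring `R = k[X]/(X^(l+1))`. -/
abbrev Rq := Polynomial k ⧸ Ideal.span {(Polynomial.X : Polynomial k) ^ (l + 1)}

/-- The free module `N = R²`. -/
abbrev Nq := Rq k l × Rq k l

/-- The class of `X` in `R`. -/
noncomputable def Xq : Rq k l := Ideal.Quotient.mk _ Polynomial.X

/-- The first standard basis vector `e₁ = (1,0)`. -/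
noncomputable def e₁ : Nq k l := (1, 0)

/-- The second standard basis vector `e₂ = (0,1)`. -/
noncomputable def e₂ : Nq k l := (0, 1)

/-- The submodule `N₁ = R·e₁ + R·(X e₂)` of pairs whose second coordinate lies
in the ideal `(X)`. -/
noncomputable def N₁ : Submodule (Rq k l) (Nq k l) :=
  Submodule.span (Rq k l) {e₁ k l, Xq k l • e₂ k l}

/-- The vector `v = e₂ + (a₀ + a₁X + ⋯ + a_lX^l)·e₁` attached to scalars
`a₀, …, a_l ∈ k`. -/
noncomputable def vq (a : Fin (l + 1) → k) : Nq k l :=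
  e₂ k l + (∑ i : Fin (l + 1), a i • Xq k l ^ (i : ℕ)) • e₁ k l

open Polynomial Module Submodule

section Prod

variable {R : Type*} [CommRing R]

lemma mem_span_one_zero_smul_zero_one_iff (t : R) (x : R × R) :
    x ∈ span R {((1 : R), (0 : R)), t • ((0 : R), (1 : R))} ↔ x.2 ∈ Ideal.span {t} := by
  rw [mem_span_pair, Ideal.mem_span_singleton']
  constructor
  · rintro ⟨a, b, rfl⟩
    exact ⟨b, by simp⟩
  · rintro ⟨b, hb⟩
    exact ⟨x.1, b, by ext <;> simp [hb]⟩

lemma eq_of_mk_one_mem_span_mk_one {p q : R} (h : (q, (1 : R)) ∈ span R {(p, (1 : R))}) :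
    q = p := by
  obtain ⟨r, hr⟩ := mem_span_singleton.mp h
  simp only [Prod.smul_mk, smul_eq_mul, mul_one, Prod.mk.injEq] at hr
  rw [← hr.1, hr.2, one_mul]

lemma disjoint_span_mk_one_span_mk_zero (p c : R) :
    Disjoint (span R {(p, (1 : R))}) (span R {(c, (0 : R))}) := by
  rw [disjoint_def]
  rintro x hp hc
  obtain ⟨r, rfl⟩ := mem_span_singleton.mp hp
  obtain ⟨s, hs⟩ := mem_span_singleton.mp hc
  have hr : r = 0 := by simpa using (congrArg Prod.snd hs).symm
  simp [hr]

lemma sub_snd_smul_mk_one (p : R) (x : R × R) :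
    x - x.2 • (p, 1) = (x.1 - x.2 * p) • ((1 : R), (0 : R)) := by
  ext <;> simp

lemma exists_span_singleton_eq_top_of_mk_one_mem {L : Submodule R (R × R)} {p : R}
    (h : (p, 1) ∈ L) : ∃ x : (R × R) ⧸ L, span R {x} = ⊤ := by
  refine ⟨L.mkQ (1, 0), eq_top_iff'.mpr fun y ↦ ?_⟩
  obtain ⟨x, rfl⟩ := L.mkQ_surjective y
  refine mem_span_singleton.mpr ⟨x.1 - x.2 * p, ?_⟩
  rw [← map_smul, mkQ_apply, mkQ_apply, Submodule.Quotient.eq, ← sub_snd_smul_mk_one,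
    sub_sub_cancel_left]
  exact L.neg_mem (L.smul_mem _ h)

lemma exists_mk_zero_mem_of_span_mk_one_lt {p : R} {L : Submodule R (R × R)}
    (hlt : span R {(p, (1 : R))} < L) : ∃ d ≠ 0, (d, (0 : R)) ∈ L := by
  obtain ⟨u, huL, hu⟩ := SetLike.exists_of_lt hlt
  have hd : u - u.2 • (p, 1) = (u.1 - u.2 * p, 0) := by
    rw [sub_snd_smul_mk_one, Prod.smul_mk, smul_eq_mul, smul_eq_mul, mul_one, mul_zero]
  have hpL : (p, 1) ∈ L := hlt.le (mem_span_singleton_self _)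
  refine ⟨u.1 - u.2 * p, fun h ↦ hu ?_, hd ▸ sub_mem huL (L.smul_mem _ hpL)⟩
  rw [h, ← Prod.zero_eq_mk, sub_eq_zero] at hd
  exact hd ▸ smul_mem _ _ (mem_span_singleton_self _)

variable (K : Type*) [Field K] [Algebra K R]

lemma finrank_span_mk_one (p : R) : finrank K (span R {(p, (1 : R))}) = finrank K R := by
  have hinj : Function.Injective (LinearMap.toSpanSingleton R (R × R) (p, 1)) := fun r s h ↦ by
    simpa using congrArg Prod.snd h
  rw [LinearMap.span_singleton_eq_range,
    ← ((LinearEquiv.ofInjective _ hinj).restrictScalars K).finrank_eq]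

variable {M : Type*} [AddCommGroup M] [Module R M] [Module K M] [IsScalarTower K R M]

lemma eq_of_le_of_finrank_le_of_isScalarTower [FiniteDimensional K M] {P Q : Submodule R M}
    (hle : P ≤ Q) (h : finrank K Q ≤ finrank K P) : P = Q :=
  restrictScalars_injective K R M (eq_of_le_of_finrank_le (restrictScalars_mono K hle) h)

lemma finrank_sup_of_disjoint [FiniteDimensional K M] {P Q : Submodule R M} (h : Disjoint P Q) :
    finrank K ↥(P ⊔ Q) = finrank K P + finrank K Q := by
  have := finrank_sup_add_finrank_inf_eq (P.restrictScalars K) (Q.restrictScalars K)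
  rw [← restrictScalars_sup, ← restrictScalars_inf, h.eq_bot, restrictScalars_bot] at this
  rwa [finrank_bot, add_zero] at this

end Prod

section QuotientRing

variable {k l}

local notation "mk" => Ideal.Quotient.mk (Ideal.span {(X : k[X]) ^ (l + 1)})

lemma Xq_def : Xq k l = mk X := rfl

variable (k l) in
noncomputable def powBasis : Basis (Fin (l + 1)) k (Rq k l) :=
  (AdjoinRoot.powerBasis (pow_ne_zero (l + 1) X_ne_zero)).basis.reindex
    (finCongr (by rw [AdjoinRoot.powerBasis_dim, natDegree_X_pow]))

@[simp]
lemma powBasis_apply (i : Fin (l + 1)) : powBasis k l i = Xq k l ^ (i : ℕ) :=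
  ((AdjoinRoot.powerBasis _).basis.reindex_apply _ i).trans (PowerBasis.basis_eq_pow _ _)

instance : FiniteDimensional k (Rq k l) := .of_basis (powBasis k l)

lemma finrank_Rq : finrank k (Rq k l) = l + 1 := by
  simp [finrank_eq_card_basis (powBasis k l)]

lemma Xq_pow_succ : Xq k l ^ (l + 1) = 0 := by
  rw [Xq_def, ← map_pow, Ideal.Quotient.eq_zero_iff_mem]
  exact Ideal.mem_span_singleton_self _

lemma Xq_pow_ne_zero : Xq k l ^ l ≠ 0 := by
  simpa using (powBasis k l).ne_zero (Fin.last l)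

lemma isUnit_mk_iff (q : k[X]) : IsUnit (mk q) ↔ ¬ X ∣ q := by
  have : (Ideal.span {(X : k[X])}).IsMaximal :=
    PrincipalIdealRing.isMaximal_of_irreducible irreducible_X
  have h := Ideal.Quotient.isUnit_mk_pow_iff_notMem (Ideal.span {(X : k[X])}) l.succ_ne_zero
    (x := q)
  rwa [Ideal.span_singleton_pow, Ideal.mem_span_singleton] at h

lemma exists_sum_smul_Xq_pow_eq (r : Rq k l) :
    ∃ a : Fin (l + 1) → k, ∑ i, a i • Xq k l ^ (i : ℕ) = r :=
  ⟨(powBasis k l).equivFun r, by simpa using (powBasis k l).sum_equivFun r⟩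

lemma sum_smul_Xq_pow_injective :
    Function.Injective fun a : Fin (l + 1) → k ↦ ∑ i, a i • Xq k l ^ (i : ℕ) := by
  convert (powBasis k l).equivFun.symm.injective using 1
  funext a
  simp [Basis.equivFun_symm_apply]

lemma isUnit_of_notMem_span_Xq {r : Rq k l} (hr : r ∉ Ideal.span {Xq k l}) : IsUnit r := by
  obtain ⟨q, rfl⟩ := Ideal.Quotient.mk_surjective r
  rw [isUnit_mk_iff]
  rintro ⟨s, rfl⟩
  exact hr (Ideal.mem_span_singleton.mpr ⟨mk s, map_mul _ _ _⟩)

lemma one_notMem_span_Xq : (1 : Rq k l) ∉ Ideal.span {Xq k l} := by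
  have : Nontrivial (Rq k l) := ⟨⟨_, _, Xq_pow_ne_zero⟩⟩
  rw [← Ideal.eq_top_iff_one, Ideal.span_singleton_eq_top]
  exact IsNilpotent.not_isUnit ⟨_, Xq_pow_succ⟩

lemma exists_mul_eq_Xq_pow {r : Rq k l} (hr : r ≠ 0) : ∃ s, s * r = Xq k l ^ l := by
  obtain ⟨q, rfl⟩ := Ideal.Quotient.mk_surjective r
  have hq : q ≠ 0 := by rintro rfl; exact hr (map_zero _)
  obtain ⟨q', hqq', hq'⟩ := exists_eq_pow_rootMultiplicity_mul_and_not_dvd q hq 0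
  simp only [map_zero, sub_zero] at hqq' hq'
  set m := rootMultiplicity 0 q
  have hm : m ≤ l := by
    by_contra! hm
    refine hr (Ideal.Quotient.eq_zero_iff_mem.mpr (Ideal.mem_span_singleton.mpr ?_))
    rw [hqq']
    exact dvd_mul_of_dvd_left (pow_dvd_pow X hm) _
  obtain ⟨u, hu⟩ := (isUnit_mk_iff (l := l) q').mpr hq'
  -- `r = X^m u` with `u` a unit, so `u⁻¹ X^(l-m)` works
  refine ⟨↑u⁻¹ * Xq k l ^ (l - m), ?_⟩
  rw [hqq', map_mul, map_pow, ← Xq_def, ← hu]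
  calc _ = Xq k l ^ (l - m) * Xq k l ^ m * (↑u⁻¹ * ↑u) := by ring
    _ = Xq k l ^ l := by rw [Units.inv_mul, mul_one, ← pow_add, Nat.sub_add_cancel hm]

lemma exists_mul_Xq_pow_eq_algebraMap_mul (r : Rq k l) :
    ∃ c : k, r * Xq k l ^ l = algebraMap k (Rq k l) c * Xq k l ^ l := by
  obtain ⟨q, rfl⟩ := Ideal.Quotient.mk_surjective r
  obtain ⟨s, hs⟩ := X_dvd_sub_C (p := q)
  refine ⟨q.coeff 0, ?_⟩
  have : mk q - algebraMap k (Rq k l) (q.coeff 0) = Xq k l * mk s := by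
    rw [Xq_def, ← map_mul, ← hs, map_sub]
    rfl
  rw [← sub_eq_zero, ← sub_mul, this, mul_right_comm, ← pow_succ', Xq_pow_succ,
    zero_mul]

variable {M : Type*} [AddCommGroup M] [Module (Rq k l) M] [Module k M]
  [IsScalarTower k (Rq k l) M]

lemma restrictScalars_span_Xq_pow_smul (x : M) :
    (span (Rq k l) {Xq k l ^ l • x}).restrictScalars k = span k {Xq k l ^ l • x} := by
  refine le_antisymm (fun y hy ↦ ?_) (span_le_restrictScalars k _ _)
  obtain ⟨r, rfl⟩ := mem_span_singleton.mp hy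
  obtain ⟨c, hc⟩ := exists_mul_Xq_pow_eq_algebraMap_mul r
  rw [← mul_smul, hc, mul_smul, algebraMap_smul]
  exact smul_mem _ c (mem_span_singleton_self _)

lemma finrank_span_Xq_pow_smul {x : M} (hx : Xq k l ^ l • x ≠ 0) :
    finrank k (span (Rq k l) {Xq k l ^ l • x}) = 1 := by
  have := finrank_span_singleton (K := k) hx
  rwa [← restrictScalars_span_Xq_pow_smul] at this

end QuotientRing

section Flags

variable {k l}

lemma vq_eq (a : Fin (l + 1) → k) : vq k l a = (∑ i, a i • Xq k l ^ (i : ℕ), 1) := by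
  ext <;> simp [vq, e₁, e₂]

lemma Xq_pow_smul_e₁ : Xq k l ^ l • e₁ k l = (Xq k l ^ l, 0) := by
  ext <;> simp [e₁]

lemma mem_N₁_iff (x : Nq k l) : x ∈ N₁ k l ↔ x.2 ∈ Ideal.span {Xq k l} :=
  mem_span_one_zero_smul_zero_one_iff _ x

lemma not_span_vq_le_N₁ (a : Fin (l + 1) → k) : ¬ span (Rq k l) {vq k l a} ≤ N₁ k l := by
  intro h
  have := (mem_N₁_iff _).mp (h (mem_span_singleton_self _))
  rw [vq_eq] at this
  exact one_notMem_span_Xq this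

lemma span_vq_injective :
    Function.Injective fun a : Fin (l + 1) → k ↦ span (Rq k l) {vq k l a} := by
  intro a b h
  refine sum_smul_Xq_pow_injective (eq_of_mk_one_mem_span_mk_one ?_).symm
  simp only at h
  rw [← vq_eq, ← vq_eq, h]
  exact mem_span_singleton_self _

lemma finrank_span_vq (a : Fin (l + 1) → k) :
    finrank k (span (Rq k l) {vq k l a}) = l + 1 := by
  rw [vq_eq, finrank_span_mk_one, finrank_Rq]

lemma finrank_span_vq_sup (a : Fin (l + 1) → k) :
    finrank k ↥(span (Rq k l) {vq k l a} ⊔ span (Rq k l) {Xq k l ^ l • e₁ k l}) = l + 2 := by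
  have hdisj : Disjoint (span (Rq k l) {vq k l a}) (span (Rq k l) {Xq k l ^ l • e₁ k l}) := by
    rw [vq_eq, Xq_pow_smul_e₁]
    exact disjoint_span_mk_one_span_mk_zero _ _
  rw [finrank_sup_of_disjoint k hdisj, finrank_span_vq,
    finrank_span_Xq_pow_smul (by simp [Xq_pow_smul_e₁, Xq_pow_ne_zero])]

lemma exists_eq_span_vq {L : Submodule (Rq k l) (Nq k l)} (hL : finrank k L = l + 1)
    (hN₁ : ¬ L ≤ N₁ k l) : ∃ a, L = span (Rq k l) {vq k l a} := by
  obtain ⟨w, hwL, hwN₁⟩ := SetLike.not_le_iff_exists.mp hN₁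
  obtain ⟨u, hu⟩ := isUnit_of_notMem_span_Xq ((mem_N₁_iff w).not.mp hwN₁)
  obtain ⟨a, ha⟩ := exists_sum_smul_Xq_pow_eq (((u⁻¹ : (Rq k l)ˣ) : Rq k l) * w.1)
  have hv : vq k l a = (↑u⁻¹ : Rq k l) • w := by
    rw [vq_eq, ha]
    ext <;> simp [← hu]
  have hle : span (Rq k l) {vq k l a} ≤ L :=
    span_singleton_le_iff_mem _ _ |>.mpr (hv ▸ L.smul_mem _ hwL)
  exact ⟨a, (eq_of_le_of_finrank_le_of_isScalarTower k hle (by rw [hL, finrank_span_vq])).symm⟩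

lemma Xq_pow_smul_e₁_mem {a : Fin (l + 1) → k} {L' : Submodule (Rq k l) (Nq k l)}
    (hlt : span (Rq k l) {vq k l a} < L') : Xq k l ^ l • e₁ k l ∈ L' := by
  rw [vq_eq] at hlt
  obtain ⟨d, hd0, hd⟩ := exists_mk_zero_mem_of_span_mk_one_lt hlt
  obtain ⟨s, hs⟩ := exists_mul_eq_Xq_pow hd0
  have : Xq k l ^ l • e₁ k l = s • (d, 0) := by simp [e₁, ← hs]
  exact this ▸ L'.smul_mem s hd

lemma eq_span_vq_sup {a : Fin (l + 1) → k} {L' : Submodule (Rq k l) (Nq k l)}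
    (hle : span (Rq k l) {vq k l a} ≤ L') (hL' : finrank k L' = l + 2) :
    L' = span (Rq k l) {vq k l a} ⊔ span (Rq k l) {Xq k l ^ l • e₁ k l} := by
  have hlt : span (Rq k l) {vq k l a} < L' := hle.lt_of_ne fun h ↦ by
    rw [← h, finrank_span_vq] at hL'
    omega
  have hX : span (Rq k l) {Xq k l ^ l • e₁ k l} ≤ L' :=
    (span_singleton_le_iff_mem _ _).mpr (Xq_pow_smul_e₁_mem hlt)
  exact (eq_of_le_of_finrank_le_of_isScalarTower k (sup_le hle hX)
    (by rw [hL', finrank_span_vq_sup])).symm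

end Flags

/-- The paper's Lemma `LemmaNeq`: for `R`-submodules `L ⊆ L'` of `N = R²`,
`R = k[X]/(X^(l+1))`, the conditions `dim_k L = l+1`, `dim_k L' = l+2`, `N/L` and
`N/L'` cyclic, `L ⊄ N₁` hold if and only if `L = R·v` and `L' = L + ⟨X^l e₁⟩` for
the vector `v = e₂ + (a₀ + ⋯ + a_lX^l)e₁` attached to some scalars `a₀, …, a_l ∈ k`;
moreover the scalars are uniquely determined by `(L, L')`, and `L'` is uniquely
determined by `L`. -/
theorem flag_parametrization (L L' : Submodule (Rq k l) (Nq k l)) (hLL' : L ≤ L') :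
    ((Module.finrank k ↥L = l + 1 ∧ Module.finrank k ↥L' = l + 2 ∧
      (∃ x : Nq k l ⧸ L, Submodule.span (Rq k l) {x} = ⊤) ∧
      (∃ x : Nq k l ⧸ L', Submodule.span (Rq k l) {x} = ⊤) ∧
      ¬ L ≤ N₁ k l) ↔
     (∃ a : Fin (l + 1) → k,
        L = Submodule.span (Rq k l) {vq k l a} ∧
        L' = Submodule.span (Rq k l) {vq k l a} ⊔
          Submodule.span (Rq k l) {Xq k l ^ l • e₁ k l})) ∧
    (∀ a b : Fin (l + 1) → k,
      (L = Submodule.span (Rq k l) {vq k l a} ∧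
        L' = Submodule.span (Rq k l) {vq k l a} ⊔
          Submodule.span (Rq k l) {Xq k l ^ l • e₁ k l}) →
      (L = Submodule.span (Rq k l) {vq k l b} ∧
        L' = Submodule.span (Rq k l) {vq k l b} ⊔
          Submodule.span (Rq k l) {Xq k l ^ l • e₁ k l}) →
      a = b) ∧
    (∀ L₁ L₂ : Submodule (Rq k l) (Nq k l),
      (∃ a : Fin (l + 1) → k,
        L = Submodule.span (Rq k l) {vq k l a} ∧
        L₁ = Submodule.span (Rq k l) {vq k l a} ⊔
          Submodule.span (Rq k l) {Xq k l ^ l • e₁ k l}) →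
      (∃ a : Fin (l + 1) → k,
        L = Submodule.span (Rq k l) {vq k l a} ∧
        L₂ = Submodule.span (Rq k l) {vq k l a} ⊔
          Submodule.span (Rq k l) {Xq k l ^ l • e₁ k l}) →
      L₁ = L₂) := by
  refine ⟨⟨?_, ?_⟩, ?_, ?_⟩
  · rintro ⟨hL, hL', -, -, hN₁⟩
    obtain ⟨a, rfl⟩ := exists_eq_span_vq hL hN₁
    exact ⟨a, rfl, eq_span_vq_sup hLL' hL'⟩
  · rintro ⟨a, rfl, rfl⟩
    have hv : (∑ i, a i • Xq k l ^ (i : ℕ), 1) ∈ span (Rq k l) {vq k l a} :=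
      vq_eq a ▸ mem_span_singleton_self _
    exact ⟨finrank_span_vq a, finrank_span_vq_sup a,
      exists_span_singleton_eq_top_of_mk_one_mem hv,
      exists_span_singleton_eq_top_of_mk_one_mem (mem_sup_left hv), not_span_vq_le_N₁ a⟩
  · rintro a b ⟨ha, -⟩ ⟨hb, -⟩
    exact span_vq_injective (ha.symm.trans hb)
  · rintro L₁ L₂ ⟨a, ha, rfl⟩ ⟨b, hb, rfl⟩
    rw [span_vq_injective (ha.symm.trans hb)]

end ADLV
end
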